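/- Let n ≥ 2 and let f be a strictly positive, n-times differentiable function on [a,b] satisfying f⁽ⁱ⁾ ≥ 0 for i = 1,…,n-2, f⁽ⁿ⁻¹⁾(x) > 0 for all x ∈ [a,b], and f⁽ⁿ⁾ ≤ 0. Let h belong to D₊[a,b] or D₋[a,b] be increasing with 0 ≤ h ≤ 1, and let α ≤ n/(n-1). Set K := f(a)^{n+1} if α ≥ 0, K := f(a)^{n+1-α}·f(b)^{α} if α < 0, and C := f(a) if α ≤ 1, C := f(b) if α > 1. Then (b-a)·K·h(a)^{n-1}/f⁽ⁿ⁻¹⁾(a) + (n+1-α)·(C^{n(1-α)}/n!)·(∫_a^b f^{α}·h)ⁿ ≤ ∫_a^b f^{n+1}·h^{n-1}/f⁽ⁿ⁻¹⁾. -/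

import Mathlib

/-!
Write `W(x) = ∫_a^x f^α` and `u(x) = ∫_a^x f^α h`. Taylor's formula under the sign conditions gives
`(x - a)^(n-2) f⁽ⁿ⁻¹⁾(x) ≤ (n-2)! f'(x)`; together with `W(x) ≤ (x - a) max (f(a)^α, f(x)^α)` and
the choice of `C`, it makes `(n-1)! f^(n+1-α) - (n+1-α) C^(n(1-α)) W^(n-1) f⁽ⁿ⁻¹⁾` nondecreasing.
Multiplying the resulting bound by `f^α h^(n-1) / f⁽ⁿ⁻¹⁾` and using `u ≤ W h`, `h ≤ 1` and the
monotonicity of `h` and `f⁽ⁿ⁻¹⁾` gives a pointwise inequality, which integrates to the theorem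
since `∫ u^(n-1) u' = u(b)^n / n`.
-/

/-- `D₊[a,b]`: continuous functions on `[a,b]` having a right-derivative at every
point of `(a,b)`. -/
def DPlus (a b : ℝ) (h : ℝ → ℝ) : Prop :=
  ContinuousOn h (Set.Icc a b) ∧ ∀ x ∈ Set.Ioo a b, ∃ L : ℝ, HasDerivWithinAt h L (Set.Ioi x) x

/-- `D₋[a,b]`: continuous functions on `[a,b]` having a left-derivative at every
point of `(a,b)`. -/
def DMinus (a b : ℝ) (h : ℝ → ℝ) : Prop :=
  ContinuousOn h (Set.Icc a b) ∧ ∀ x ∈ Set.Ioo a b, ∃ L : ℝ, HasDerivWithinAt h L (Set.Iio x) x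

open Set MeasureTheory Real
open scoped Nat Topology

section Calculus

variable {a b : ℝ}

lemma monotoneOn_Icc_of_hasDerivAt_nonneg {F F' : ℝ → ℝ} (hF : ContinuousOn F (Icc a b))
    (hF' : ∀ x ∈ Ioo a b, HasDerivAt F (F' x) x) (h0 : ∀ x ∈ Ioo a b, 0 ≤ F' x) :
    MonotoneOn F (Icc a b) :=
  monotoneOn_of_hasDerivWithinAt_nonneg (convex_Icc a b) hF
    (by simpa only [interior_Icc] using fun x hx => (hF' x hx).hasDerivWithinAt)
    (by simpa only [interior_Icc] using h0)

lemma antitoneOn_Icc_of_hasDerivAt_nonpos {F F' : ℝ → ℝ} (hF : ContinuousOn F (Icc a b))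
    (hF' : ∀ x ∈ Ioo a b, HasDerivAt F (F' x) x) (h0 : ∀ x ∈ Ioo a b, F' x ≤ 0) :
    AntitoneOn F (Icc a b) :=
  antitoneOn_of_hasDerivWithinAt_nonpos (convex_Icc a b) hF
    (by simpa only [interior_Icc] using fun x hx => (hF' x hx).hasDerivWithinAt)
    (by simpa only [interior_Icc] using h0)

lemma hasDerivAt_iteratedDerivWithin_Icc {f : ℝ → ℝ} {i : ℕ} {x : ℝ}
    (hf : DifferentiableOn ℝ (iteratedDerivWithin i f (Icc a b)) (Icc a b)) (hx : x ∈ Ioo a b) :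
    HasDerivAt (iteratedDerivWithin i f (Icc a b))
      (iteratedDerivWithin (i + 1) f (Icc a b) x) x := by
  have hmem : Icc a b ∈ 𝓝 x := Icc_mem_nhds hx.1 hx.2
  rw [iteratedDerivWithin_succ, derivWithin_of_mem_nhds hmem]
  exact ((hf x (Ioo_subset_Icc_self hx)).differentiableAt hmem).hasDerivAt

lemma continuousOn_primitive_Icc {w : ℝ → ℝ} (hab : a ≤ b) (hw : ContinuousOn w (Icc a b)) :
    ContinuousOn (fun x => ∫ t in a..x, w t) (Icc a b) := by
  have h := intervalIntegral.continuousOn_primitive_interval (f := w) (a := a) (b := b)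
    (μ := volume) (by simpa only [uIcc_of_le hab] using hw.integrableOn_Icc)
  rwa [uIcc_of_le hab] at h

lemma hasDerivAt_primitive_of_mem_Ioo {w : ℝ → ℝ} (hw : ContinuousOn w (Icc a b)) {x : ℝ}
    (hx : x ∈ Ioo a b) : HasDerivAt (fun y => ∫ t in a..y, w t) (w x) x :=
  intervalIntegral.integral_hasDerivAt_right
    ((hw.mono (Icc_subset_Icc_right hx.2.le)).intervalIntegrable_of_Icc hx.1.le)
    ((hw.mono Ioo_subset_Icc_self).stronglyMeasurableAtFilter isOpen_Ioo x hx)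
    (hw.continuousAt (Icc_mem_nhds hx.1 hx.2))

lemma integral_mul_le_integral_mul_of_monotoneOn {w h : ℝ → ℝ} (hw : ContinuousOn w (Icc a b))
    (hw0 : ∀ x ∈ Icc a b, 0 ≤ w x) (hh : ContinuousOn h (Icc a b))
    (hhm : MonotoneOn h (Icc a b)) {x : ℝ} (hx : x ∈ Icc a b) :
    ∫ t in a..x, w t * h t ≤ (∫ t in a..x, w t) * h x := by
  have hax : Icc a x ⊆ Icc a b := Icc_subset_Icc_right hx.2
  rw [← intervalIntegral.integral_mul_const]
  refine intervalIntegral.integral_mono_on hx.1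
    (((hw.mul hh).mono hax).intervalIntegrable_of_Icc hx.1)
    (((hw.mul continuousOn_const).mono hax).intervalIntegrable_of_Icc hx.1) fun t ht => ?_
  exact mul_le_mul_of_nonneg_left (hhm (hax ht) hx ht.2) (hw0 t (hax ht))

end Calculus

lemma pow_mul_le_factorial_mul_of_hasDerivAt {D : ℕ → ℝ → ℝ} {a b : ℝ} {m : ℕ}
    (hcont : ∀ i ≤ m, ContinuousOn (D i) (Icc a b))
    (hderiv : ∀ i ≤ m, ∀ x ∈ Ioo a b, HasDerivAt (D i) (D (i + 1) x) x)
    (htop : ∀ x ∈ Ioo a b, D (m + 1) x ≤ 0) {j k : ℕ} (hjk : j + k = m)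
    (ha : ∀ i, j ≤ i → i < m → 0 ≤ D i a) {x : ℝ} (hx : x ∈ Icc a b) :
    (x - a) ^ k * D m x ≤ k ! * D j x := by
  induction k generalizing j x with
  | zero => subst hjk; simp
  | succ k ih =>
    have haI : a ∈ Icc a b := ⟨le_rfl, hx.1.trans hx.2⟩
    have hM : MonotoneOn (fun y => (k + 1)! * D j y - (y - a) ^ (k + 1) * D m y) (Icc a b) := by
      refine monotoneOn_Icc_of_hasDerivAt_nonneg
        (F' := fun y => (k + 1) * (k ! * D (j + 1) y - (y - a) ^ k * D m y)
          - (y - a) ^ (k + 1) * D (m + 1) y) ?_ (fun y hy => ?_) (fun y hy => ?_)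
      · exact (continuousOn_const.mul (hcont j (by omega))).sub
          ((continuousOn_id.sub continuousOn_const).pow _ |>.mul (hcont m le_rfl))
      · have hpow : HasDerivAt (fun y => (y - a) ^ (k + 1)) ((k + 1) * (y - a) ^ k) y := by
          simpa using ((hasDerivAt_id y).sub_const a).fun_pow (k + 1)
        refine ((hderiv j (by omega) y hy).const_mul _).sub
          (hpow.mul (hderiv m le_rfl y hy)) |>.congr_deriv ?_
        push_cast [Nat.factorial_succ]
        ring
      · have hIH := ih (j := j + 1) (by omega) (fun i hi him => ha i (by omega) him)
          (Ioo_subset_Icc_self hy)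
        have hya : 0 ≤ y - a := by linarith [hy.1]
        have htop' := mul_nonpos_of_nonneg_of_nonpos (pow_nonneg hya (k + 1)) (htop y hy)
        nlinarith
    have hMa := hM haI hx hx.1
    have hDa := ha j le_rfl (by omega)
    simp only [sub_self, zero_pow (Nat.succ_ne_zero k), zero_mul, sub_zero] at hMa
    have : (0 : ℝ) ≤ (k + 1)! * D j a := by positivity
    linarith

lemma ite_rpow_mul_ite_pow_le {n : ℕ} (hn : 2 ≤ n) {α A F B : ℝ} (hA : 0 < A) (hAF : A ≤ F)
    (hFB : F ≤ B) :
    (if α ≤ 1 then A else B) ^ ((n : ℝ) * (1 - α)) * (if 0 ≤ α then F ^ α else A ^ α) ^ (n - 2)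
      ≤ F ^ ((n : ℝ) - 2 * α) := by
  have hF : 0 < F := hA.trans_le hAF
  have hn' : (2 : ℝ) ≤ n := by exact_mod_cast hn
  have hpow : ∀ T : ℝ, 0 < T → (T ^ α) ^ (n - 2) = T ^ (α * ((n : ℝ) - 2)) := fun T hT => by
    rw [← rpow_natCast, ← rpow_mul hT.le, Nat.cast_sub hn, Nat.cast_ofNat]
  rcases lt_or_ge α 0 with hα | hα
  · rw [if_pos (by linarith), if_neg (by linarith), hpow A hA, ← rpow_add hA]
    calc A ^ ((n : ℝ) * (1 - α) + α * ((n : ℝ) - 2)) = A ^ ((n : ℝ) - 2 * α) := by ring_nf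
      _ ≤ F ^ ((n : ℝ) - 2 * α) := rpow_le_rpow hA.le hAF (by linarith)
  · have hC : (if α ≤ 1 then A else B) ^ ((n : ℝ) * (1 - α)) ≤ F ^ ((n : ℝ) * (1 - α)) := by
      split_ifs with h1
      · exact rpow_le_rpow hA.le hAF (by nlinarith)
      · exact rpow_le_rpow_of_nonpos hF hFB (by nlinarith)
    rw [if_pos hα, hpow F hF]
    calc _ ≤ F ^ ((n : ℝ) * (1 - α)) * F ^ (α * ((n : ℝ) - 2)) :=
          mul_le_mul_of_nonneg_right hC (rpow_nonneg hF.le _)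
      _ = F ^ ((n : ℝ) - 2 * α) := by rw [← rpow_add hF]; ring_nf

lemma ite_rpow_le_rpow_mul_rpow {n : ℕ} {α A F B : ℝ} (hA : 0 < A) (hAF : A ≤ F) (hFB : F ≤ B) :
    (if 0 ≤ α then A ^ (n + 1) else A ^ ((n : ℝ) + 1 - α) * B ^ α)
      ≤ A ^ ((n : ℝ) + 1 - α) * F ^ α := by
  have hF : 0 < F := hA.trans_le hAF
  split_ifs with hα
  · calc A ^ (n + 1) = A ^ ((n : ℝ) + 1 - α) * A ^ α := by
          rw [← rpow_add hA, sub_add_cancel, ← Nat.cast_succ, rpow_natCast]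
      _ ≤ A ^ ((n : ℝ) + 1 - α) * F ^ α := by gcongr
  · exact mul_le_mul_of_nonneg_left (rpow_le_rpow_of_nonpos hF hFB (not_le.1 hα).le)
      (rpow_nonneg hA.le _)

/-- Intended instance: `f' = f⁽¹⁾`, `g = f⁽ⁿ⁻¹⁾`, `g' = f⁽ⁿ⁾`. -/
structure TaylorControl (a b : ℝ) (n : ℕ) (f f' g g' : ℝ → ℝ) : Prop where
  pos : ∀ x ∈ Icc a b, 0 < f x
  continuousOn : ContinuousOn f (Icc a b)
  monotoneOn : MonotoneOn f (Icc a b)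
  hasDerivAt : ∀ x ∈ Ioo a b, HasDerivAt f (f' x) x
  g_pos : ∀ x ∈ Icc a b, 0 < g x
  g_continuousOn : ContinuousOn g (Icc a b)
  g_hasDerivAt : ∀ x ∈ Ioo a b, HasDerivAt g (g' x) x
  g'_nonpos : ∀ x ∈ Ioo a b, g' x ≤ 0
  taylor : ∀ x ∈ Icc a b, (x - a) ^ (n - 2) * g x ≤ (n - 2)! * f' x

namespace TaylorControl

variable {a b : ℝ} {n : ℕ} {f f' g g' : ℝ → ℝ}

lemma continuousOn_rpow (hc : TaylorControl a b n f f' g g') (α : ℝ) :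
    ContinuousOn (fun x => f x ^ α) (Icc a b) :=
  hc.continuousOn.rpow_const fun x hx => Or.inl (hc.pos x hx).ne'

lemma ite_rpow_nonneg (hc : TaylorControl a b n f f' g g') (hab : a ≤ b) (α r : ℝ) :
    0 ≤ (if α ≤ 1 then f a else f b) ^ r := by
  split_ifs
  exacts [rpow_nonneg (hc.pos a ⟨le_rfl, hab⟩).le r, rpow_nonneg (hc.pos b ⟨hab, le_rfl⟩).le r]

lemma integral_rpow_le (hc : TaylorControl a b n f f' g g') (α : ℝ) {x : ℝ}
    (hx : x ∈ Icc a b) :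
    ∫ t in a..x, f t ^ α ≤ (x - a) * (if 0 ≤ α then f x ^ α else f a ^ α) := by
  have hax : Icc a x ⊆ Icc a b := Icc_subset_Icc_right hx.2
  have haI : a ∈ Icc a b := ⟨le_rfl, hx.1.trans hx.2⟩
  have h := intervalIntegral.integral_mono_on (g := fun _ => if 0 ≤ α then f x ^ α else f a ^ α)
    (μ := volume) hx.1 (((hc.continuousOn_rpow α).mono hax).intervalIntegrable_of_Icc hx.1)
    intervalIntegrable_const fun t ht => ?_
  · simpa only [intervalIntegral.integral_const, smul_eq_mul] using h
  · split_ifs with hα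
    · exact rpow_le_rpow (hc.pos t (hax ht)).le (hc.monotoneOn (hax ht) hx ht.2) hα
    · exact rpow_le_rpow_of_nonpos (hc.pos a haI) (hc.monotoneOn haI (hax ht) ht.1)
        (not_le.1 hα).le

lemma integral_rpow_nonneg (hc : TaylorControl a b n f f' g g') (α : ℝ) {x : ℝ}
    (hx : x ∈ Icc a b) : 0 ≤ ∫ t in a..x, f t ^ α :=
  intervalIntegral.integral_nonneg hx.1 fun t ht =>
    (rpow_pos_of_pos (hc.pos t ⟨ht.1, ht.2.trans hx.2⟩) α).le

lemma rpow_mul_integral_pow_mul_le (hc : TaylorControl a b n f f' g g') (hn : 2 ≤ n) (α : ℝ)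
    {x : ℝ} (hx : x ∈ Icc a b) :
    (if α ≤ 1 then f a else f b) ^ ((n : ℝ) * (1 - α)) * (∫ t in a..x, f t ^ α) ^ (n - 2)
        * (f x ^ α * g x)
      ≤ (n - 2)! * (f x ^ ((n : ℝ) - α) * f' x) := by
  have haI : a ∈ Icc a b := ⟨le_rfl, hx.1.trans hx.2⟩
  have hbI : b ∈ Icc a b := ⟨hx.1.trans hx.2, le_rfl⟩
  have hfx := hc.pos x hx
  have hfa := hc.pos a haI
  have hC := hc.ite_rpow_nonneg (hx.1.trans hx.2) α ((n : ℝ) * (1 - α))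
  have hfg : 0 ≤ f x ^ α * g x := mul_nonneg (rpow_nonneg hfx.le _) (hc.g_pos x hx).le
  have hscalar := ite_rpow_mul_ite_pow_le (α := α) hn hfa (hc.monotoneOn haI hx hx.1)
    (hc.monotoneOn hx hbI hx.2)
  calc _ ≤ (if α ≤ 1 then f a else f b) ^ ((n : ℝ) * (1 - α))
        * ((x - a) * (if 0 ≤ α then f x ^ α else f a ^ α)) ^ (n - 2) * (f x ^ α * g x) := by
        gcongr
        · exact hc.integral_rpow_nonneg α hx
        · exact hc.integral_rpow_le α hx
    _ = (if α ≤ 1 then f a else f b) ^ ((n : ℝ) * (1 - α))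
        * (if 0 ≤ α then f x ^ α else f a ^ α) ^ (n - 2) * f x ^ α * ((x - a) ^ (n - 2) * g x) := by
        rw [mul_pow]; ring
    _ ≤ f x ^ ((n : ℝ) - 2 * α) * f x ^ α * ((n - 2)! * f' x) :=
        mul_le_mul (mul_le_mul_of_nonneg_right hscalar (rpow_nonneg hfx.le _)) (hc.taylor x hx)
          (mul_nonneg (pow_nonneg (sub_nonneg.2 hx.1) _) (hc.g_pos x hx).le)
          (mul_nonneg (rpow_nonneg hfx.le _) (rpow_nonneg hfx.le _))
    _ = (n - 2)! * (f x ^ ((n : ℝ) - α) * f' x) := by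
        rw [← rpow_add hfx]; ring_nf

lemma mul_integral_pow_mul_le (hc : TaylorControl a b n f f' g g') (hn : 2 ≤ n) {α : ℝ}
    (hα : α ≤ n + 1) {x : ℝ} (hx : x ∈ Icc a b) :
    ((n : ℝ) + 1 - α) * (if α ≤ 1 then f a else f b) ^ ((n : ℝ) * (1 - α))
        * (∫ t in a..x, f t ^ α) ^ (n - 1) * g x
      ≤ (n - 1)! * (f x ^ ((n : ℝ) + 1 - α) - f a ^ ((n : ℝ) + 1 - α)) := by
  set p : ℝ := (n : ℝ) + 1 - α
  set κ := (if α ≤ 1 then f a else f b) ^ ((n : ℝ) * (1 - α))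
  set W := fun y => ∫ t in a..y, f t ^ α
  have haI : a ∈ Icc a b := ⟨le_rfl, hx.1.trans hx.2⟩
  have hp : 0 ≤ p := by linarith
  have hfact : ((n - 1)! : ℝ) = (n - 1 : ℕ) * (n - 2)! := by
    rw [show n - 2 = n - 1 - 1 by omega, ← Nat.cast_mul, Nat.mul_factorial_pred (by omega)]
  have hM : MonotoneOn (fun y => (n - 1)! * f y ^ p - p * κ * W y ^ (n - 1) * g y) (Icc a b) := by
    refine monotoneOn_Icc_of_hasDerivAt_nonneg
      (F' := fun y => p * (n - 1 : ℕ) * ((n - 2)! * (f y ^ ((n : ℝ) - α) * f' y)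
          - κ * W y ^ (n - 2) * (f y ^ α * g y)) - p * κ * W y ^ (n - 1) * g' y)
      ?_ (fun y hy => ?_) (fun y hy => ?_)
    · exact (continuousOn_const.mul (hc.continuousOn_rpow p)).sub
        ((continuousOn_const.mul ((continuousOn_primitive_Icc (hx.1.trans hx.2)
          (hc.continuousOn_rpow α)).pow _)).mul hc.g_continuousOn)
    · have hfy := hc.pos y (Ioo_subset_Icc_self hy)
      have hW := hasDerivAt_primitive_of_mem_Ioo (hc.continuousOn_rpow α) hy
      refine (((hc.hasDerivAt y hy).rpow_const (p := p) (Or.inl hfy.ne')).const_mul _).sub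
        (((hW.fun_pow (n - 1)).const_mul (p * κ)).mul (hc.g_hasDerivAt y hy)) |>.congr_deriv ?_
      rw [hfact, Nat.sub_sub, show p - 1 = (n : ℝ) - α by ring]
      ring
    · have h1 := hc.rpow_mul_integral_pow_mul_le hn α (Ioo_subset_Icc_self hy)
      have h2 : 0 ≤ κ * W y ^ (n - 1) := mul_nonneg (hc.ite_rpow_nonneg (hx.1.trans hx.2) α _)
        (pow_nonneg (hc.integral_rpow_nonneg α (Ioo_subset_Icc_self hy)) _)
      have h3 := mul_nonpos_of_nonneg_of_nonpos (mul_nonneg hp h2) (hc.g'_nonpos y hy)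
      have h4 := mul_nonneg (mul_nonneg hp (Nat.cast_nonneg (n - 1))) (sub_nonneg.2 h1)
      linarith
  have hMx := hM haI hx hx.1
  simp only [W, intervalIntegral.integral_same, zero_pow (by omega : n - 1 ≠ 0), mul_zero,
    zero_mul, sub_zero] at hMx
  linarith

lemma add_mul_integral_pow_mul_le (hc : TaylorControl a b n f f' g g') (hn : 2 ≤ n) {α : ℝ}
    (hα : α ≤ n + 1) {h : ℝ → ℝ} (hh : ContinuousOn h (Icc a b)) (hhm : MonotoneOn h (Icc a b))
    (hh01 : ∀ x ∈ Icc a b, 0 ≤ h x ∧ h x ≤ 1) {x : ℝ} (hx : x ∈ Icc a b) :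
    (if 0 ≤ α then f a ^ (n + 1) else f a ^ ((n : ℝ) + 1 - α) * f b ^ α) * h a ^ (n - 1) / g a
        + ((n : ℝ) + 1 - α) * (if α ≤ 1 then f a else f b) ^ ((n : ℝ) * (1 - α)) / (n - 1)!
          * ((∫ t in a..x, f t ^ α * h t) ^ (n - 1) * (f x ^ α * h x))
      ≤ f x ^ (n + 1) * h x ^ (n - 1) / g x := by
  set K := if 0 ≤ α then f a ^ (n + 1) else f a ^ ((n : ℝ) + 1 - α) * f b ^ α
  set E := ((n : ℝ) + 1 - α) * (if α ≤ 1 then f a else f b) ^ ((n : ℝ) * (1 - α)) / (n - 1)!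
  set W := ∫ t in a..x, f t ^ α
  set u := ∫ t in a..x, f t ^ α * h t
  have haI : a ∈ Icc a b := ⟨le_rfl, hx.1.trans hx.2⟩
  have hbI : b ∈ Icc a b := ⟨hx.1.trans hx.2, le_rfl⟩
  have hfx := hc.pos x hx
  have hfa := hc.pos a haI
  have hgx := hc.g_pos x hx
  have hhx := hh01 x hx
  have hE : 0 ≤ E := div_nonneg (mul_nonneg (by linarith)
    (hc.ite_rpow_nonneg (hx.1.trans hx.2) α _)) (Nat.cast_nonneg _)
  have hW : E * W ^ (n - 1) * g x ≤ f x ^ ((n : ℝ) + 1 - α) - f a ^ ((n : ℝ) + 1 - α) := by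
    rw [div_mul_eq_mul_div, div_mul_eq_mul_div, div_le_iff₀ (by positivity)]
    linarith [hc.mul_integral_pow_mul_le hn hα hx]
  have hsum : K + E * W ^ (n - 1) * g x * f x ^ α ≤ f x ^ (n + 1) := by
    have hK : K ≤ f a ^ ((n : ℝ) + 1 - α) * f x ^ α := ite_rpow_le_rpow_mul_rpow hfa
      (hc.monotoneOn haI hx hx.1) (hc.monotoneOn hx hbI hx.2)
    have := mul_le_mul_of_nonneg_right hW (rpow_nonneg hfx.le α)
    have hpow : f x ^ ((n : ℝ) + 1 - α) * f x ^ α = f x ^ (n + 1) := by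
      rw [← rpow_add hfx, sub_add_cancel, ← Nat.cast_succ, rpow_natCast]
    rw [sub_mul, hpow] at this
    linarith
  have hu : u ^ (n - 1) * h x ≤ W ^ (n - 1) * h x ^ (n - 1) := by
    have hu0 : 0 ≤ u := intervalIntegral.integral_nonneg hx.1 fun t ht => by
      have htI : t ∈ Icc a b := ⟨ht.1, ht.2.trans hx.2⟩
      exact mul_nonneg (rpow_nonneg (hc.pos t htI).le α) (hh01 t htI).1
    have huW : u ≤ W * h x := integral_mul_le_integral_mul_of_monotoneOn
      (hc.continuousOn_rpow α) (fun t ht => (rpow_pos_of_pos (hc.pos t ht) α).le) hh hhm hx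
    calc u ^ (n - 1) * h x ≤ (W * h x) ^ (n - 1) * 1 :=
          mul_le_mul (pow_le_pow_left₀ hu0 huW _) hhx.2 hhx.1 (pow_nonneg (hu0.trans huW) _)
      _ = W ^ (n - 1) * h x ^ (n - 1) := by rw [mul_pow, mul_one]
  have hratio : h a ^ (n - 1) / g a ≤ h x ^ (n - 1) / g x :=
    div_le_div₀ (pow_nonneg hhx.1 _) (pow_le_pow_left₀ (hh01 a haI).1 (hhm haI hx hx.1) _) hgx
      ((antitoneOn_Icc_of_hasDerivAt_nonpos hc.g_continuousOn hc.g_hasDerivAt hc.g'_nonpos)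
        haI hx hx.1)
  calc K * h a ^ (n - 1) / g a + E * (u ^ (n - 1) * (f x ^ α * h x))
      ≤ K * (h x ^ (n - 1) / g x) + E * (W ^ (n - 1) * h x ^ (n - 1)) * f x ^ α := by
        have hK0 : 0 ≤ K := by
          simp only [K]
          split_ifs
          exacts [pow_nonneg hfa.le _,
            mul_nonneg (rpow_nonneg hfa.le _) (rpow_nonneg (hc.pos b hbI).le _)]
        have hEf : 0 ≤ E * f x ^ α := mul_nonneg hE (rpow_nonneg hfx.le α)
        rw [mul_div_assoc]
        linarith [mul_le_mul_of_nonneg_left hratio hK0, mul_le_mul_of_nonneg_left hu hEf]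
    _ = (K + E * W ^ (n - 1) * g x * f x ^ α) * (h x ^ (n - 1) / g x) := by
        field_simp
    _ ≤ f x ^ (n + 1) * (h x ^ (n - 1) / g x) :=
        mul_le_mul_of_nonneg_right hsum (div_nonneg (pow_nonneg hhx.1 _) hgx.le)
    _ = f x ^ (n + 1) * h x ^ (n - 1) / g x := (mul_div_assoc _ _ _).symm

theorem add_mul_integral_pow_le_integral (hc : TaylorControl a b n f f' g g') (hab : a ≤ b)
    (hn : 2 ≤ n) {α : ℝ} (hα : α ≤ n + 1) {h : ℝ → ℝ} (hh : ContinuousOn h (Icc a b))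
    (hhm : MonotoneOn h (Icc a b)) (hh01 : ∀ x ∈ Icc a b, 0 ≤ h x ∧ h x ≤ 1) :
    (b - a) * (if 0 ≤ α then f a ^ (n + 1) else f a ^ ((n : ℝ) + 1 - α) * f b ^ α)
          * h a ^ (n - 1) / g a
        + ((n : ℝ) + 1 - α) * ((if α ≤ 1 then f a else f b) ^ ((n : ℝ) * (1 - α)) / n !)
          * (∫ x in a..b, f x ^ α * h x) ^ n
      ≤ ∫ x in a..b, f x ^ (n + 1) * h x ^ (n - 1) / g x := by
  set K := if 0 ≤ α then f a ^ (n + 1) else f a ^ ((n : ℝ) + 1 - α) * f b ^ α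
  set κ := (if α ≤ 1 then f a else f b) ^ ((n : ℝ) * (1 - α))
  set u := fun x => ∫ t in a..x, f t ^ α * h t
  have hw : ContinuousOn (fun t => f t ^ α * h t) (Icc a b) := (hc.continuousOn_rpow α).mul hh
  have hu : ContinuousOn u (Icc a b) := continuousOn_primitive_Icc hab hw
  have hrhs : ContinuousOn
      (fun x => ((n : ℝ) + 1 - α) * κ / (n - 1)! * (u x ^ (n - 1) * (f x ^ α * h x))) (Icc a b) :=
    continuousOn_const.mul ((hu.pow _).mul hw)
  have hFTC : ∫ x in a..b, ((n : ℝ) + 1 - α) * κ / (n - 1)! * (u x ^ (n - 1) * (f x ^ α * h x))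
      = ((n : ℝ) + 1 - α) * (κ / n !) * u b ^ n := by
    rw [intervalIntegral.integral_eq_sub_of_hasDerivAt_of_le (f := fun x =>
      ((n : ℝ) + 1 - α) * (κ / n !) * u x ^ n) hab (continuousOn_const.mul (hu.pow n))
      (fun x hx => ((hasDerivAt_primitive_of_mem_Ioo hw hx).fun_pow n).const_mul
        (((n : ℝ) + 1 - α) * (κ / n !)) |>.congr_deriv ?_)
      (hrhs.intervalIntegrable_of_Icc hab)]
    · simp [u, zero_pow (by omega : n ≠ 0)]
    · rw [← Nat.mul_factorial_pred (by omega : n ≠ 0), Nat.cast_mul]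
      field_simp
      ring
  calc (b - a) * K * h a ^ (n - 1) / g a + ((n : ℝ) + 1 - α) * (κ / n !) * u b ^ n
      = ∫ x in a..b, (K * h a ^ (n - 1) / g a
          + ((n : ℝ) + 1 - α) * κ / (n - 1)! * (u x ^ (n - 1) * (f x ^ α * h x))) := by
        rw [intervalIntegral.integral_add intervalIntegrable_const
          (hrhs.intervalIntegrable_of_Icc hab), hFTC, intervalIntegral.integral_const, smul_eq_mul]
        ring
    _ ≤ ∫ x in a..b, f x ^ (n + 1) * h x ^ (n - 1) / g x := by
        refine intervalIntegral.integral_mono_on hab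
          ((continuousOn_const.add hrhs).intervalIntegrable_of_Icc hab) ?_
          fun x hx => hc.add_mul_integral_pow_mul_le hn hα hh hhm hh01 hx
        exact (((hc.continuousOn.pow _).mul (hh.pow _)).div hc.g_continuousOn
          fun x hx => (hc.g_pos x hx).ne').intervalIntegrable_of_Icc hab

end TaylorControl

lemma taylorControl_iteratedDerivWithin {a b : ℝ} {n : ℕ} {f : ℝ → ℝ} (hn : 2 ≤ n)
    (hf_pos : ∀ x ∈ Icc a b, 0 < f x)
    (hf_diff : ∀ i < n, DifferentiableOn ℝ (iteratedDerivWithin i f (Icc a b)) (Icc a b))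
    (hf_nonneg : ∀ i, 1 ≤ i → i ≤ n - 2 → ∀ x ∈ Icc a b,
      0 ≤ iteratedDerivWithin i f (Icc a b) x)
    (hf_pos' : ∀ x ∈ Icc a b, 0 < iteratedDerivWithin (n - 1) f (Icc a b) x)
    (hf_np : ∀ x ∈ Icc a b, iteratedDerivWithin n f (Icc a b) x ≤ 0) :
    TaylorControl a b n f (iteratedDerivWithin 1 f (Icc a b))
      (iteratedDerivWithin (n - 1) f (Icc a b)) (iteratedDerivWithin n f (Icc a b)) := by
  have hderiv : ∀ i < n, ∀ x ∈ Ioo a b, HasDerivAt (iteratedDerivWithin i f (Icc a b))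
      (iteratedDerivWithin (i + 1) f (Icc a b) x) x :=
    fun i hi x hx => hasDerivAt_iteratedDerivWithin_Icc (hf_diff i hi) hx
  have htop : ∀ x ∈ Ioo a b, iteratedDerivWithin (n - 1 + 1) f (Icc a b) x ≤ 0 := by
    simpa only [Nat.sub_add_cancel (by omega : 1 ≤ n)] using
      fun x hx => hf_np x (Ioo_subset_Icc_self hx)
  have hcont : ContinuousOn f (Icc a b) := by
    simpa only [iteratedDerivWithin_zero] using (hf_diff 0 (by omega)).continuousOn
  have hf' : ∀ x ∈ Ioo a b, HasDerivAt f (iteratedDerivWithin 1 f (Icc a b) x) x := by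
    simpa only [iteratedDerivWithin_zero] using hderiv 0 (by omega)
  have hD1 : ∀ x ∈ Ioo a b, 0 ≤ iteratedDerivWithin 1 f (Icc a b) x := fun x hx => by
    rcases hn.eq_or_lt with rfl | hn3
    · exact (hf_pos' x (Ioo_subset_Icc_self hx)).le
    · exact hf_nonneg 1 le_rfl (by omega) x (Ioo_subset_Icc_self hx)
  refine ⟨hf_pos, hcont, monotoneOn_Icc_of_hasDerivAt_nonneg hcont hf' hD1, hf', hf_pos',
    (hf_diff (n - 1) (by omega)).continuousOn, ?_, fun x hx => hf_np x (Ioo_subset_Icc_self hx),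
    fun x hx => ?_⟩
  · simpa only [Nat.sub_add_cancel (by omega : 1 ≤ n)] using hderiv (n - 1) (by omega)
  · exact pow_mul_le_factorial_mul_of_hasDerivAt (D := fun i => iteratedDerivWithin i f (Icc a b))
      (fun i hi => (hf_diff i (by omega)).continuousOn) (fun i hi => hderiv i (by omega)) htop
      (by omega : 1 + (n - 2) = n - 1)
      (fun i hi him => hf_nonneg i hi (by omega) a ⟨le_rfl, hx.1.trans hx.2⟩) hx

theorem stmt4 (a b : ℝ) (hab : a < b) (n : ℕ) (hn : 2 ≤ n)
    (f : ℝ → ℝ) (hf_pos : ∀ x ∈ Set.Icc a b, 0 < f x)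
    (hf_diff : ∀ i < n,
      DifferentiableOn ℝ (iteratedDerivWithin i f (Set.Icc a b)) (Set.Icc a b))
    (hf_nonneg : ∀ i, 1 ≤ i → i ≤ n - 2 → ∀ x ∈ Set.Icc a b,
      0 ≤ iteratedDerivWithin i f (Set.Icc a b) x)
    (hf_pos' : ∀ x ∈ Set.Icc a b, 0 < iteratedDerivWithin (n - 1) f (Set.Icc a b) x)
    (hf_np : ∀ x ∈ Set.Icc a b, iteratedDerivWithin n f (Set.Icc a b) x ≤ 0)
    (h : ℝ → ℝ) (hD : DPlus a b h ∨ DMinus a b h)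
    (hh_mono : MonotoneOn h (Set.Icc a b))
    (hh_bdd : ∀ x ∈ Set.Icc a b, 0 ≤ h x ∧ h x ≤ 1)
    (α : ℝ) (hα : α ≤ (n : ℝ) / ((n : ℝ) - 1)) :
    (b - a) *
        (if 0 ≤ α then f a ^ (n + 1) else f a ^ ((n : ℝ) + 1 - α) * f b ^ α) *
        h a ^ (n - 1) / iteratedDerivWithin (n - 1) f (Set.Icc a b) a +
      ((n : ℝ) + 1 - α) *
        ((if α ≤ 1 then f a else f b) ^ ((n : ℝ) * (1 - α)) / (n.factorial : ℝ)) *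
        (∫ x in a..b, f x ^ α * h x) ^ n ≤
    ∫ x in a..b, f x ^ (n + 1) * h x ^ (n - 1) /
      iteratedDerivWithin (n - 1) f (Set.Icc a b) x := by
  have hα' : α ≤ n + 1 := by
    have hn' : (2 : ℝ) ≤ n := by exact_mod_cast hn
    have : (n : ℝ) / ((n : ℝ) - 1) ≤ 2 := by
      rw [div_le_iff₀ (by linarith)]
      linarith
    linarith
  have hc := taylorControl_iteratedDerivWithin hn hf_pos hf_diff hf_nonneg hf_pos' hf_np
  exact hc.add_mul_integral_pow_le_integral hab.le hn hα' (hD.elim And.left And.left) hh_mono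
    hh_bdd
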